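/- arXiv:2105.03622 — 2 statements merged into one kernel-verified Lean document; each statement's English description precedes it below -/
import Mathlib

section
/- Let φ be a weak Φ-function on Ω and Γ a family of rectifiable curves in Ω. Then M_φ(Γ) = 0 if and only if there exists a non-negative Borel function u ∈ L^φ(Ω) such that ∫_γ u ds = ∞ for every γ ∈ Γ. -/
open MeasureTheory Filter Set
open scoped ENNReal NNReal Topology

noncomputable section

/-- Points of `ℝⁿ`. -/
abbrev Pt (n : ℕ) := Fin n → ℝ

/-- A weak Φ-function on `Ω ⊆ ℝⁿ` (argument in `[0,∞]`, values in `[0,∞]`). -/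
structure IsWeakPhi {n : ℕ} (Ω : Set (Pt n)) (φ : Pt n → ℝ≥0∞ → ℝ≥0∞) : Prop where
  measurable_comp : ∀ f : Pt n → ℝ≥0∞, Measurable f → Measurable fun x => φ x (f x)
  mono : ∀ x, Monotone (φ x)
  map_zero : ∀ x, φ x 0 = 0
  tendsto_zero : ∀ x, Tendsto (φ x) (𝓝[>] (0 : ℝ≥0∞)) (𝓝 0)
  tendsto_top : ∀ x, Tendsto (fun t : ℝ≥0 => φ x (t : ℝ≥0∞)) atTop (𝓝 ⊤)
  aInc_one : ∃ L : ℝ≥0∞, 1 ≤ L ∧ L ≠ ⊤ ∧ ∀ x, ∀ s t : ℝ≥0∞, 0 < s → s ≤ t →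
    φ x s / s ≤ L * (φ x t / t)

/-- The modular `ϱ_φ(f) = ∫_Ω φ(x, f(x)) dx`. -/
def modularPhi {n : ℕ} (Ω : Set (Pt n)) (φ : Pt n → ℝ≥0∞ → ℝ≥0∞)
    (f : Pt n → ℝ≥0∞) : ℝ≥0∞ :=
  ∫⁻ x in Ω, φ x (f x)

/-- The Luxemburg norm on the generalized Orlicz space `L^φ(Ω)`. -/
def luxNorm {n : ℕ} (Ω : Set (Pt n)) (φ : Pt n → ℝ≥0∞ → ℝ≥0∞)
    (f : Pt n → ℝ≥0∞) : ℝ≥0∞ :=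
  sInf {lam : ℝ≥0∞ | lam ≠ 0 ∧ modularPhi Ω φ (fun x => f x / lam) ≤ 1}

/-- Membership in the generalized Orlicz space `L^φ(Ω)`. -/
def MemLphi {n : ℕ} (Ω : Set (Pt n)) (φ : Pt n → ℝ≥0∞ → ℝ≥0∞)
    (f : Pt n → ℝ≥0∞) : Prop :=
  Measurable f ∧
    Tendsto (fun lam : ℝ≥0∞ => modularPhi Ω φ (fun x => lam * f x)) (𝓝[>] 0) (𝓝 0)

/-- `|u|` of a real-valued function, as an `ℝ≥0∞`-valued function. -/
def ennAbs {n : ℕ} (u : Pt n → ℝ) : Pt n → ℝ≥0∞ := fun x => ENNReal.ofReal |u x|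

/-- A rectifiable curve, parametrized by arclength on `[0, len]`. -/
structure RectCurve (n : ℕ) where
  len : ℝ
  len_nonneg : 0 ≤ len
  toFun : ℝ → Pt n
  lip : LipschitzOnWith 1 toFun (Set.Icc 0 len)

/-- The image of a rectifiable curve. -/
def RectCurve.image {n : ℕ} (γ : RectCurve n) : Set (Pt n) :=
  γ.toFun '' Set.Icc 0 γ.len

/-- The curve lies in `Ω`. -/
def RectCurve.In {n : ℕ} (γ : RectCurve n) (Ω : Set (Pt n)) : Prop :=
  γ.image ⊆ Ω

/-- The arclength integral `∫_γ u ds` of an `[0,∞]`-valued function. -/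
def curveInt {n : ℕ} (γ : RectCurve n) (u : Pt n → ℝ≥0∞) : ℝ≥0∞ :=
  ∫⁻ t in Set.Icc 0 γ.len, u (γ.toFun t)

/-- `u` is admissible for the curve family `Γ`. -/
def Admissible {n : ℕ} (Γ : Set (RectCurve n)) (u : Pt n → ℝ≥0∞) : Prop :=
  Measurable u ∧ ∀ γ ∈ Γ, 1 ≤ curveInt γ u

/-- The norm-based `φ`-modulus of a curve family. -/
def modulusPhi {n : ℕ} (Ω : Set (Pt n)) (φ : Pt n → ℝ≥0∞ → ℝ≥0∞)
    (Γ : Set (RectCurve n)) : ℝ≥0∞ :=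
  sInf (luxNorm Ω φ '' {u | Admissible Γ u})

/-- The modular-based `φ`-modulus of a curve family. -/
def modulusPhiMod {n : ℕ} (Ω : Set (Pt n)) (φ : Pt n → ℝ≥0∞ → ℝ≥0∞)
    (Γ : Set (RectCurve n)) : ℝ≥0∞ :=
  sInf (modularPhi Ω φ '' {u | Admissible Γ u})

/-- The family of rectifiable curves in `Ω` whose image meets `E`. -/
def curvesMeeting {n : ℕ} (Ω E : Set (Pt n)) : Set (RectCurve n) :=
  {γ | γ.In Ω ∧ (γ.image ∩ E).Nonempty}

/-- `f` is absolutely continuous on the interval `[a,b]`. -/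
def IsACOn (f : ℝ → ℝ) (a b : ℝ) : Prop :=
  ∀ ε > (0 : ℝ), ∃ δ > (0 : ℝ), ∀ (m : ℕ) (s t : Fin m → ℝ),
    (∀ i, s i ∈ Set.Icc a b ∧ t i ∈ Set.Icc a b ∧ s i ≤ t i) →
    Pairwise (fun i j => Disjoint (Set.Ioo (s i) (t i)) (Set.Ioo (s j) (t j))) →
    (∑ i, (t i - s i)) < δ → (∑ i, |f (t i) - f (s i)|) < ε

/-- `u` is absolutely continuous on (almost every) line segment parallel to the
coordinate axes: for each direction `k` and a.e. line, `u` is absolutely continuous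
on every compact subinterval of the line lying in `Ω`. -/
def MemACL {n : ℕ} (Ω : Set (Pt n)) (u : Pt n → ℝ) : Prop :=
  ∀ k : Fin n, ∀ᵐ x : Pt n, ∀ a b : ℝ, a ≤ b →
    (∀ z ∈ Set.Icc a b, Function.update x k z ∈ Ω) →
    IsACOn (fun z => u (Function.update x k z)) a b

/-- The family of rectifiable curves in `Ω` along which `u` fails to be
absolutely continuous. -/
def NACcurves {n : ℕ} (Ω : Set (Pt n)) (u : Pt n → ℝ) : Set (RectCurve n) :=
  {γ | γ.In Ω ∧ ¬ IsACOn (fun t => u (γ.toFun t)) 0 γ.len}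

/-- `u` is absolutely continuous on `φ`-a.e. curve. -/
def MemACC {n : ℕ} (Ω : Set (Pt n)) (φ : Pt n → ℝ≥0∞ → ℝ≥0∞) (u : Pt n → ℝ) : Prop :=
  modulusPhi Ω φ (NACcurves Ω u) = 0

/-- The classical gradient of a (C¹) function, as a vector in `ℝⁿ`. -/
def gradC {n : ℕ} (v : Pt n → ℝ) (x : Pt n) : Pt n :=
  fun k => fderiv ℝ v x (Pi.single k 1)

/-- `g` is the `k`-th weak partial derivative of `u` in `Ω`. -/
def IsWeakPartialDeriv {n : ℕ} (Ω : Set (Pt n)) (k : Fin n) (u g : Pt n → ℝ) : Prop :=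
  ∀ ψ : Pt n → ℝ, ContDiff ℝ (⊤ : ℕ∞) ψ → HasCompactSupport ψ → tsupport ψ ⊆ Ω →
    ∫ x in Ω, u x * gradC ψ x k = - ∫ x in Ω, g x * ψ x

/-- `g` is the weak gradient of `u` in `Ω`. -/
def HasWeakGradient {n : ℕ} (Ω : Set (Pt n)) (u : Pt n → ℝ) (g : Pt n → Pt n) : Prop :=
  ∀ k : Fin n, IsWeakPartialDeriv Ω k u (fun x => g x k)

/-- Membership in the Orlicz–Sobolev space `W^{1,φ}(Ω)`. -/
def MemW1phi {n : ℕ} (Ω : Set (Pt n)) (φ : Pt n → ℝ≥0∞ → ℝ≥0∞) (u : Pt n → ℝ) : Prop :=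
  MemLphi Ω φ (ennAbs u) ∧
    ∃ g : Pt n → Pt n, Measurable g ∧ HasWeakGradient Ω u g ∧
      MemLphi Ω φ (fun x => ENNReal.ofReal ‖g x‖)

/-- The Sobolev norm `‖v‖_φ + ‖∇v‖_φ` of a C¹ function (classical gradient). -/
def sobNormC {n : ℕ} (Ω : Set (Pt n)) (φ : Pt n → ℝ≥0∞ → ℝ≥0∞) (v : Pt n → ℝ) : ℝ≥0∞ :=
  luxNorm Ω φ (ennAbs v) + luxNorm Ω φ (fun x => ENNReal.ofReal ‖gradC v x‖)

/-- `g` is the a.e. classical gradient of `u` on `Ω` (partial derivatives along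
the coordinate lines). -/
def HasAEClassicalGradient {n : ℕ} (Ω : Set (Pt n)) (u : Pt n → ℝ) (g : Pt n → Pt n) : Prop :=
  ∀ᵐ x ∂(volume.restrict Ω), ∀ k : Fin n,
    HasDerivAt (fun z => u (Function.update x k z)) (g x k) (x k)

/-- `ACL^φ(Ω)`: ACL functions whose a.e. classical gradient has norm in `L^φ(Ω)`. -/
def MemACLphi {n : ℕ} (Ω : Set (Pt n)) (φ : Pt n → ℝ≥0∞ → ℝ≥0∞) (u : Pt n → ℝ) : Prop :=
  MemACL Ω u ∧ ∃ g : Pt n → Pt n, Measurable g ∧ HasAEClassicalGradient Ω u g ∧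
    MemLphi Ω φ (fun x => ENNReal.ofReal ‖g x‖)

/-- `ACC^φ(Ω)`: ACC functions whose a.e. classical gradient has norm in `L^φ(Ω)`. -/
def MemACCphi {n : ℕ} (Ω : Set (Pt n)) (φ : Pt n → ℝ≥0∞ → ℝ≥0∞) (u : Pt n → ℝ) : Prop :=
  MemACC Ω φ u ∧ ∃ g : Pt n → Pt n, Measurable g ∧ HasAEClassicalGradient Ω u g ∧
    MemLphi Ω φ (fun x => ENNReal.ofReal ‖g x‖)

/-- `C¹(Ω)` functions are dense in `W^{1,φ}(Ω)`. -/
def C1DenseInW1phi {n : ℕ} (Ω : Set (Pt n)) (φ : Pt n → ℝ≥0∞ → ℝ≥0∞) : Prop :=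
  ∀ u : Pt n → ℝ, ∀ g : Pt n → Pt n,
    MemLphi Ω φ (ennAbs u) → Measurable g → HasWeakGradient Ω u g →
    MemLphi Ω φ (fun x => ENNReal.ofReal ‖g x‖) →
    ∀ ε : ℝ≥0∞, 0 < ε → ∃ v : Pt n → ℝ, ContDiffOn ℝ 1 v Ω ∧ MemW1phi Ω φ v ∧
      luxNorm Ω φ (ennAbs (u - v)) +
        luxNorm Ω φ (fun x => ENNReal.ofReal ‖g x - gradC v x‖) < ε

end

section Aux

lemma phiTop {n : ℕ} {Ω : Set (Pt n)} {φ : Pt n → ℝ≥0∞ → ℝ≥0∞}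
    (hφ : IsWeakPhi Ω φ) (x : Pt n) : φ x ⊤ = ⊤ :=
  top_le_iff.mp (le_of_tendsto (hφ.tendsto_top x)
    (Filter.Eventually.of_forall fun t => hφ.mono x le_top))

lemma phi_scale {n : ℕ} {Ω : Set (Pt n)} {φ : Pt n → ℝ≥0∞ → ℝ≥0∞}
    (hφ : IsWeakPhi Ω φ) {L : ℝ≥0∞} (hL1 : 1 ≤ L) (hLt : L ≠ ⊤)
    (hA : ∀ x, ∀ s t : ℝ≥0∞, 0 < s → s ≤ t → φ x s / s ≤ L * (φ x t / t))
    (x : Pt n) {c : ℝ≥0∞} (hc : c ≤ 1) (t : ℝ≥0∞) :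
    φ x (c * t) ≤ c * L * φ x t := by
  have hL0 : L ≠ 0 := fun h => by simp [h] at hL1
  rcases eq_or_ne c 0 with rfl | hc0
  · simp [hφ.map_zero]
  rcases eq_or_ne t 0 with rfl | ht0
  · simp [hφ.map_zero]
  rcases eq_or_ne t ⊤ with rfl | htt
  · rw [ENNReal.mul_top hc0, phiTop hφ, ENNReal.mul_top (mul_ne_zero hc0 hL0)]
  · have hct : c * t ≠ ⊤ := ENNReal.mul_ne_top (hc.trans_lt ENNReal.one_lt_top).ne htt
    have hct0 : c * t ≠ 0 := mul_ne_zero hc0 ht0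
    have h := hA x (c * t) t (pos_iff_ne_zero.mpr hct0)
      (mul_le_of_le_one_left zero_le hc)
    calc φ x (c * t) = φ x (c * t) / (c * t) * (c * t) :=
          (ENNReal.div_mul_cancel hct0 hct).symm
      _ ≤ L * (φ x t / t) * (c * t) := mul_le_mul_left h _
      _ = c * L * φ x t * (t⁻¹ * t) := by rw [div_eq_mul_inv]; ring
      _ = c * L * φ x t := by rw [ENNReal.inv_mul_cancel ht0 htt, mul_one]

lemma modular_scale {n : ℕ} {Ω : Set (Pt n)} {φ : Pt n → ℝ≥0∞ → ℝ≥0∞}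
    (hφ : IsWeakPhi Ω φ) {L : ℝ≥0∞} (hL1 : 1 ≤ L) (hLt : L ≠ ⊤)
    (hA : ∀ x, ∀ s t : ℝ≥0∞, 0 < s → s ≤ t → φ x s / s ≤ L * (φ x t / t))
    {c : ℝ≥0∞} (hc : c ≤ 1) (f : Pt n → ℝ≥0∞) :
    modularPhi Ω φ (fun x => c * f x) ≤ c * L * modularPhi Ω φ f := by
  unfold modularPhi
  calc ∫⁻ x in Ω, φ x (c * f x)
      ≤ ∫⁻ x in Ω, c * L * φ x (f x) :=
        lintegral_mono fun x => phi_scale hφ hL1 hLt hA x hc _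
    _ = c * L * ∫⁻ x in Ω, φ x (f x) :=
        lintegral_const_mul' _ _
          (ENNReal.mul_ne_top (hc.trans_lt ENNReal.one_lt_top).ne hLt)

lemma geomsum : (∑' k : ℕ, ((2 : ℝ≥0∞)⁻¹) ^ k) = 2 := by
  rw [ENNReal.tsum_geometric, ENNReal.one_sub_inv_two, inv_inv]

end Aux
/-- `M_φ(Γ) = 0` iff there is a non-negative Borel `u ∈ L^φ(Ω)` with
`∫_γ u ds = ∞` for every `γ ∈ Γ`. -/
theorem modulusPhi_eq_zero_iff {n : ℕ} (Ω : Set (Pt n)) (hΩ : IsOpen Ω)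
    (φ : Pt n → ℝ≥0∞ → ℝ≥0∞) (hφ : IsWeakPhi Ω φ) (Γ : Set (RectCurve n))
    (hΓ : ∀ γ ∈ Γ, γ.In Ω) :
    modulusPhi Ω φ Γ = 0 ↔
      ∃ u : Pt n → ℝ≥0∞, MemLphi Ω φ u ∧ ∀ γ ∈ Γ, curveInt γ u = ⊤ := by
  constructor
  · -- forward direction
    intro h0
    obtain ⟨L, hL1, hLt, hA⟩ := hφ.aInc_one
    have hL0 : L ≠ 0 := fun h => by simp [h] at hL1
    have h2t : (2 : ℝ≥0∞) ≠ ⊤ := ENNReal.ofNat_ne_top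
    have hi0 : (2 : ℝ≥0∞)⁻¹ ≠ 0 := ENNReal.inv_ne_zero.mpr h2t
    have hex : ∀ k : ℕ, ∃ w : Pt n → ℝ≥0∞, Measurable w ∧
        modularPhi Ω φ (fun x => 2 ^ (k + 2) * w x) ≤ (2 : ℝ≥0∞)⁻¹ ^ k ∧
        ∀ γ ∈ Γ, 1 ≤ curveInt γ w := by
      intro k
      set a : ℝ≥0∞ := (2 : ℝ≥0∞)⁻¹ ^ k * L⁻¹ with ha_def
      have ha0 : a ≠ 0 := mul_ne_zero (pow_ne_zero _ hi0) (ENNReal.inv_ne_zero.mpr hLt)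
      have ha1 : a ≤ 1 := mul_le_one' (pow_le_one' (ENNReal.inv_le_one.mpr one_le_two) _)
        (ENNReal.inv_le_one.mpr hL1)
      have hat : a ≠ ⊤ := (ha1.trans_lt ENNReal.one_lt_top).ne
      have hp0 : ((2 : ℝ≥0∞) ^ (k + 2)) ≠ 0 := pow_ne_zero _ (by norm_num)
      have hpt : ((2 : ℝ≥0∞) ^ (k + 2)) ≠ ⊤ := ENNReal.pow_ne_top h2t
      set c : ℝ≥0∞ := a * ((2 : ℝ≥0∞) ^ (k + 2))⁻¹ with hc_def
      have hc0 : c ≠ 0 := mul_ne_zero ha0 (ENNReal.inv_ne_zero.mpr hpt)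
      have hct : c ≠ ⊤ := ENNReal.mul_ne_top hat (ENNReal.inv_ne_top.mpr hp0)
      have hca : (2 : ℝ≥0∞) ^ (k + 2) * c = a := by
        have h1 : (2 : ℝ≥0∞) ^ (k + 2) * ((2 : ℝ≥0∞) ^ (k + 2))⁻¹ = 1 :=
          ENNReal.mul_inv_cancel hp0 hpt
        calc (2 : ℝ≥0∞) ^ (k + 2) * (a * ((2 : ℝ≥0∞) ^ (k + 2))⁻¹)
            = a * ((2 : ℝ≥0∞) ^ (k + 2) * ((2 : ℝ≥0∞) ^ (k + 2))⁻¹) := by ring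
          _ = a := by rw [h1, mul_one]
      have hlt : modulusPhi Ω φ Γ < c := by
        rw [h0]; exact pos_iff_ne_zero.mpr hc0
      unfold modulusPhi at hlt
      obtain ⟨b, hb, hbc⟩ := sInf_lt_iff.mp hlt
      obtain ⟨v, hv, rfl⟩ := hb
      unfold luxNorm at hbc
      obtain ⟨lam, ⟨hlam0, hlmod⟩, hlamc⟩ := sInf_lt_iff.mp hbc
      have hlamt : lam ≠ ⊤ := (hlamc.trans_le le_top).ne
      refine ⟨fun x => c * (v x / lam), ?_, ?_, ?_⟩
      · exact (hv.1.div_const _).const_mul _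
      · have heq : (fun x => (2 : ℝ≥0∞) ^ (k + 2) * (c * (v x / lam)))
            = fun x => a * (v x / lam) := by
          funext x; rw [← mul_assoc, hca]
        rw [heq]
        calc modularPhi Ω φ (fun x => a * (v x / lam))
            ≤ a * L * modularPhi Ω φ (fun x => v x / lam) :=
              modular_scale hφ hL1 hLt hA ha1 _
          _ ≤ a * L * 1 := mul_le_mul_right hlmod _
          _ = (2 : ℝ≥0∞)⁻¹ ^ k * (L⁻¹ * L) := by rw [mul_one, ha_def, mul_assoc]
          _ = (2 : ℝ≥0∞)⁻¹ ^ k := by rw [ENNReal.inv_mul_cancel hL0 hLt, mul_one]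
      · intro γ hγ
        have hconst : c * lam⁻¹ ≠ ⊤ :=
          ENNReal.mul_ne_top hct (ENNReal.inv_ne_top.mpr hlam0)
        have h1 : curveInt γ (fun x => c * (v x / lam))
            = (c * lam⁻¹) * curveInt γ v := by
          unfold curveInt
          rw [← lintegral_const_mul' _ _ hconst]
          exact lintegral_congr fun t => by simp only [div_eq_mul_inv]; ring
        rw [h1]
        calc (1 : ℝ≥0∞) ≤ c * lam⁻¹ := by
              rw [← div_eq_mul_inv]
              exact (ENNReal.le_div_iff_mul_le (Or.inl hlam0) (Or.inl hlamt)).mpr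
                (by rw [one_mul]; exact hlamc.le)
          _ = (c * lam⁻¹) * 1 := (mul_one _).symm
          _ ≤ (c * lam⁻¹) * curveInt γ v := mul_le_mul_right (hv.2 γ hγ) _
    choose w hwm hwmod hwc using hex
    set u : Pt n → ℝ≥0∞ := fun x => ∑' k, w k x with hu_def
    have humeas : Measurable u := Measurable.ennreal_tsum hwm
    have hBmeas : Measurable fun x => ∑' k : ℕ, φ x (2 ^ (k + 2) * w k x) :=
      Measurable.ennreal_tsum fun k => hφ.measurable_comp _ ((hwm k).const_mul _)
    have hsum : (∫⁻ x in Ω, ∑' k : ℕ, φ x (2 ^ (k + 2) * w k x)) ≤ 2 := by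
      rw [lintegral_tsum fun k =>
        (hφ.measurable_comp _ ((hwm k).const_mul _)).aemeasurable]
      exact le_trans (ENNReal.tsum_le_tsum fun k => hwmod k) geomsum.le
    have hfin : ∀ᵐ x ∂(volume.restrict Ω),
        (∑' k : ℕ, φ x (2 ^ (k + 2) * w k x)) < ⊤ :=
      ae_lt_top hBmeas (hsum.trans_lt ENNReal.ofNat_lt_top).ne
    have hpt : ∀ᵐ x ∂(volume.restrict Ω), ∀ lam : ℝ≥0∞, lam ≤ 1 →
        φ x (lam * u x) ≤ lam * L * ∑' k : ℕ, φ x (2 ^ (k + 2) * w k x) := by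
      filter_upwards [hfin] with x hB
      intro lam hlam
      set B : ℝ≥0∞ := ∑' k : ℕ, φ x (2 ^ (k + 2) * w k x) with hB_def
      obtain ⟨T, hT⟩ : ∃ T : ℝ≥0, B < φ x T :=
        ((hφ.tendsto_top x).eventually_const_lt hB).exists
      have hwle : ∀ k : ℕ, (2 : ℝ≥0∞) ^ (k + 2) * w k x ≤ (T : ℝ≥0∞) := by
        intro k
        by_contra h
        push_neg at h
        exact (hT.trans_le ((hφ.mono x h.le).trans (ENNReal.le_tsum k))).false
      set S : ℝ≥0∞ := ⨆ k : ℕ, (2 : ℝ≥0∞) ^ k * w k x with hS_def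
      have hS_T : S ≤ (T : ℝ≥0∞) := iSup_le fun k =>
        le_trans (mul_le_mul_left (pow_le_pow_right₀ one_le_two (by omega)) _) (hwle k)
      have hSt : S ≠ ⊤ := (hS_T.trans_lt ENNReal.coe_lt_top).ne
      have hu2S : u x ≤ 2 * S := by
        calc u x = ∑' k, w k x := rfl
          _ ≤ ∑' k : ℕ, (2 : ℝ≥0∞)⁻¹ ^ k * S := by
              refine ENNReal.tsum_le_tsum fun k => ?_
              have h1 : w k x = (2 : ℝ≥0∞)⁻¹ ^ k * ((2 : ℝ≥0∞) ^ k * w k x) := by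
                rw [← mul_assoc, ← mul_pow, ENNReal.inv_mul_cancel (by norm_num)
                  ENNReal.ofNat_ne_top, one_pow, one_mul]
              rw [h1]
              exact mul_le_mul_right (le_iSup (fun k => (2 : ℝ≥0∞) ^ k * w k x) k) _
          _ = (∑' k : ℕ, (2 : ℝ≥0∞)⁻¹ ^ k) * S := ENNReal.tsum_mul_right
          _ = 2 * S := by rw [geomsum]
      rcases eq_or_ne S 0 with hS0 | hS0
      · have hu0 : u x = 0 := le_antisymm (by simpa [hS0] using hu2S) zero_le
        simp [hu0, hφ.map_zero]
      · obtain ⟨k₀, hk₀⟩ := lt_iSup_iff.mp (ENNReal.half_lt_self hS0 hSt)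
        have h4 : u x ≤ (2 : ℝ≥0∞) ^ (k₀ + 2) * w k₀ x := by
          have h1 : S ≤ 2 * ((2 : ℝ≥0∞) ^ k₀ * w k₀ x) := by
            calc S = S / 2 * 2 := (ENNReal.div_mul_cancel (by norm_num) ENNReal.ofNat_ne_top).symm
              _ ≤ (2 : ℝ≥0∞) ^ k₀ * w k₀ x * 2 := mul_le_mul_left hk₀.le _
              _ = 2 * ((2 : ℝ≥0∞) ^ k₀ * w k₀ x) := mul_comm _ _
          calc u x ≤ 2 * S := hu2S
            _ ≤ 2 * (2 * ((2 : ℝ≥0∞) ^ k₀ * w k₀ x)) := mul_le_mul_right h1 _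
            _ = (2 : ℝ≥0∞) ^ (k₀ + 2) * w k₀ x := by rw [pow_add]; ring
        calc φ x (lam * u x) ≤ φ x (lam * ((2 : ℝ≥0∞) ^ (k₀ + 2) * w k₀ x)) :=
              hφ.mono x (mul_le_mul_right h4 _)
          _ ≤ lam * L * φ x ((2 : ℝ≥0∞) ^ (k₀ + 2) * w k₀ x) :=
              phi_scale hφ hL1 hLt hA x hlam _
          _ ≤ lam * L * B := mul_le_mul_right (ENNReal.le_tsum k₀) _
    have hmod : ∀ lam : ℝ≥0∞, lam ≤ 1 →
        modularPhi Ω φ (fun x => lam * u x) ≤ lam * (L * 2) := by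
      intro lam hlam
      have hlamt : lam * L ≠ ⊤ :=
        ENNReal.mul_ne_top (hlam.trans_lt ENNReal.one_lt_top).ne hLt
      unfold modularPhi
      calc (∫⁻ x in Ω, φ x (lam * u x))
          ≤ ∫⁻ x in Ω, lam * L * ∑' k : ℕ, φ x (2 ^ (k + 2) * w k x) :=
            lintegral_mono_ae (hpt.mono fun x hx => hx lam hlam)
        _ = lam * L * ∫⁻ x in Ω, ∑' k : ℕ, φ x (2 ^ (k + 2) * w k x) :=
            lintegral_const_mul' _ _ hlamt
        _ ≤ lam * L * 2 := mul_le_mul_right hsum _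
        _ = lam * (L * 2) := mul_assoc _ _ _
    refine ⟨u, ⟨humeas, ?_⟩, ?_⟩
    · have h1 : Tendsto (fun lam : ℝ≥0∞ => lam) (𝓝[>] 0) (𝓝 0) :=
        tendsto_id.mono_right nhdsWithin_le_nhds
      have h2 : Tendsto (fun lam : ℝ≥0∞ => lam * (L * 2)) (𝓝[>] 0) (𝓝 0) := by
        simpa using ENNReal.Tendsto.mul_const h1 (Or.inr (ENNReal.mul_ne_top hLt ENNReal.ofNat_ne_top))
      refine tendsto_of_tendsto_of_tendsto_of_le_of_le' tendsto_const_nhds h2 ?_ ?_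
      · exact Filter.Eventually.of_forall fun _ => zero_le
      · have h1 : ∀ᶠ lam : ℝ≥0∞ in 𝓝[>] 0, lam < 1 :=
          eventually_nhdsWithin_of_eventually_nhds
            (Filter.Tendsto.eventually_lt_const zero_lt_one tendsto_id)
        filter_upwards [h1] with lam hlam using hmod lam hlam.le
    · intro γ hγ
      have hgm : AEMeasurable γ.toFun (volume.restrict (Set.Icc 0 γ.len)) :=
        γ.lip.continuousOn.aemeasurable measurableSet_Icc
      have h1 : curveInt γ u = ∑' k : ℕ, curveInt γ (w k) := by
        unfold curveInt
        exact lintegral_tsum fun k => (hwm k).comp_aemeasurable hgm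
      rw [h1, eq_top_iff]
      calc (⊤ : ℝ≥0∞) = ∑' _ : ℕ, (1 : ℝ≥0∞) :=
            (ENNReal.tsum_const_eq_top_of_ne_zero one_ne_zero).symm
        _ ≤ ∑' k : ℕ, curveInt γ (w k) := ENNReal.tsum_le_tsum fun k => hwc k γ hγ
  · -- backward direction
    rintro ⟨u, hu, hcurve⟩
    refine le_antisymm ?_ zero_le
    refine ENNReal.le_of_forall_pos_le_add fun ε hε _ => ?_
    rw [zero_add]
    have hev1 : ∀ᶠ lam : ℝ≥0∞ in 𝓝[>] 0,
        modularPhi Ω φ (fun x => lam * u x) < 1 :=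
      hu.2.eventually_lt_const zero_lt_one
    have hev2 : ∀ᶠ lam : ℝ≥0∞ in 𝓝[>] 0, lam < 1 :=
      eventually_nhdsWithin_of_eventually_nhds
        (Filter.Tendsto.eventually_lt_const zero_lt_one tendsto_id)
    have hev3 : ∀ᶠ lam : ℝ≥0∞ in 𝓝[>] 0, lam ∈ Set.Ioi (0 : ℝ≥0∞) :=
      eventually_mem_nhdsWithin
    obtain ⟨μ, ⟨hμmod, hμ1⟩, hμ0⟩ := ((hev1.and hev2).and hev3).exists
    have hμ0' : μ ≠ 0 := (hμ0 : (0:ℝ≥0∞) < μ).ne'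
    have hμt : μ ≠ ⊤ := (hμ1.trans ENNReal.one_lt_top).ne
    have hε0 : (ε : ℝ≥0∞) ≠ 0 := ENNReal.coe_ne_zero.mpr hε.ne'
    have hεt : (ε : ℝ≥0∞) ≠ ⊤ := ENNReal.coe_ne_top
    set u' : Pt n → ℝ≥0∞ := fun x => (μ * ε) * u x with hu'_def
    have hadm : Admissible Γ u' := by
      refine ⟨hu.1.const_mul _, fun γ hγ => ?_⟩
      have h1 : curveInt γ u' = (μ * ε) * curveInt γ u := by
        unfold curveInt
        exact lintegral_const_mul' _ _ (ENNReal.mul_ne_top hμt hεt)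
      rw [h1, hcurve γ hγ, ENNReal.mul_top (mul_ne_zero hμ0' hε0)]
      exact le_top
    have hlux : luxNorm Ω φ u' ≤ (ε : ℝ≥0∞) := by
      apply sInf_le
      refine ⟨hε0, ?_⟩
      have heq : (fun x => u' x / (ε : ℝ≥0∞)) = fun x => μ * u x := by
        funext x
        rw [hu'_def]
        calc μ * ↑ε * u x / ↑ε = μ * u x * (↑ε * (↑ε)⁻¹) := by
              rw [div_eq_mul_inv]; ring
          _ = μ * u x := by rw [ENNReal.mul_inv_cancel hε0 hεt, mul_one]
      rw [heq]
      exact hμmod.le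
    calc modulusPhi Ω φ Γ ≤ luxNorm Ω φ u' :=
          sInf_le (Set.mem_image_of_mem _ hadm)
      _ ≤ (ε : ℝ≥0∞) := hlux
end

section
/- Define φ: ℝ² × [0,∞) → [0,∞) by φ(x,t) = 0 for t ≤ 1 and φ(x,t) = t − 1 for t > 1, and for y ∈ [0,1] let γ_y: [0,1] → ℝ², z ↦ (y,z), and Γ := {γ_y : y ∈ [0,1]}. Then the modular-based modulus satisfies M̃_φ(Γ) = 0 but the norm-based modulus satisfies M_φ(Γ) > 0. -/
open MeasureTheory Filter Set
open scoped ENNReal NNReal Topology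

noncomputable section
namespace Modulus6Aux

/-- The closed unit square in `ℝ²`. -/
def unitSq : Set (Pt 2) :=
  (MeasurableEquiv.piFinTwo fun _ : Fin 2 => ℝ) ⁻¹' (Set.Icc (0:ℝ) 1 ×ˢ Set.Icc (0:ℝ) 1)

lemma piFinTwo_symm_eq (y z : ℝ) :
    (MeasurableEquiv.piFinTwo fun _ : Fin 2 => ℝ).symm (y, z)
      = fun i : Fin 2 => if i = 0 then y else z := by
  funext i; fin_cases i <;> simp [MeasurableEquiv.piFinTwo, piFinTwoEquiv]

lemma volume_unitSq : volume unitSq = 1 := by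
  have hmp := MeasureTheory.volume_preserving_piFinTwo fun _ : Fin 2 => ℝ
  rw [unitSq, hmp.measure_preimage
    ((measurableSet_Icc.prod measurableSet_Icc).nullMeasurableSet)]
  rw [Measure.volume_eq_prod, Measure.prod_prod, Real.volume_Icc]
  norm_num

lemma square_lintegral_ge (u : Pt 2 → ℝ≥0∞) (hu : Measurable u)
    (hadm : ∀ y ∈ Set.Icc (0:ℝ) 1,
      1 ≤ ∫⁻ z in Set.Icc (0:ℝ) 1, u (fun i => if i = 0 then y else z)) :
    1 ≤ ∫⁻ x in unitSq, u x := by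
  set e := MeasurableEquiv.piFinTwo fun _ : Fin 2 => ℝ with he
  have hmp := MeasureTheory.volume_preserving_piFinTwo fun _ : Fin 2 => ℝ
  have key : ∫⁻ x in unitSq, u x
      = ∫⁻ p in Set.Icc (0:ℝ) 1 ×ˢ Set.Icc (0:ℝ) 1, u (e.symm p) := by
    rw [unitSq]
    have := hmp.setLIntegral_comp_preimage_emb e.measurableEmbedding
      (fun p => u (e.symm p)) (Set.Icc (0:ℝ) 1 ×ˢ Set.Icc (0:ℝ) 1)
    simp only [he, MeasurableEquiv.symm_apply_apply] at this
    exact this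
  rw [key]
  have hprod : ∫⁻ p in Set.Icc (0:ℝ) 1 ×ˢ Set.Icc (0:ℝ) 1, u (e.symm p)
      = ∫⁻ y in Set.Icc (0:ℝ) 1, ∫⁻ z in Set.Icc (0:ℝ) 1, u (e.symm (y, z)) := by
    rw [Measure.volume_eq_prod, ← Measure.prod_restrict]
    exact MeasureTheory.lintegral_prod _
      ((hu.comp e.symm.measurable).aemeasurable)
  rw [hprod]
  calc (1 : ℝ≥0∞) = 1 * volume (Set.Icc (0:ℝ) 1) := by rw [Real.volume_Icc]; norm_num
  _ = ∫⁻ _ in Set.Icc (0:ℝ) 1, (1:ℝ≥0∞) := (setLIntegral_const _ _).symm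
  _ ≤ _ := by
      refine setLIntegral_mono' measurableSet_Icc fun y hy => ?_
      calc (1:ℝ≥0∞) ≤ ∫⁻ z in Set.Icc (0:ℝ) 1, u (fun i => if i = 0 then y else z) :=
            hadm y hy
      _ = _ := by
            refine lintegral_congr fun z => ?_
            rw [piFinTwo_symm_eq]

end Modulus6Aux

end

/-- For `φ(x,t) = 0` if `t ≤ 1` and `t - 1` if `t > 1` on `ℝ²`, and the
family `Γ` of vertical unit segments `γ_y(z) = (y,z)`, `y ∈ [0,1]`, the modular-based
modulus vanishes while the norm-based modulus is positive. -/
theorem modular_modulus_zero_norm_modulus_pos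
    (φ : Pt 2 → ℝ≥0∞ → ℝ≥0∞)
    (hφ : φ = fun _ t => if t ≤ 1 then 0 else t - 1)
    (Γ : Set (RectCurve 2))
    (hΓ : Γ = {γ | ∃ y ∈ Set.Icc (0:ℝ) 1, γ.len = 1 ∧
      ∀ z ∈ Set.Icc (0:ℝ) 1, γ.toFun z = fun i => if i = 0 then y else z}) :
    modulusPhiMod Set.univ φ Γ = 0 ∧ 0 < modulusPhi Set.univ φ Γ := by
  constructor
  · -- modular-based modulus is zero: the constant function 1 is admissible
    have hadm : Admissible Γ (fun _ : Pt 2 => (1:ℝ≥0∞)) := by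
      refine ⟨measurable_const, fun γ hγ => ?_⟩
      rw [hΓ] at hγ
      obtain ⟨y, hy, hlen, -⟩ := hγ
      rw [curveInt, hlen]
      simp [Real.volume_Icc]
    have h0 : modularPhi Set.univ φ (fun _ : Pt 2 => (1:ℝ≥0∞)) = 0 := by
      simp [modularPhi, hφ]
    have hle : modulusPhiMod Set.univ φ Γ ≤ 0 := h0 ▸ sInf_le ⟨_, hadm, rfl⟩
    exact le_antisymm hle zero_le
  · -- norm-based modulus is at least 1/2
    refine lt_of_lt_of_le (by norm_num : (0:ℝ≥0∞) < 2⁻¹) (le_sInf ?_)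
    rintro b ⟨u, ⟨hu_meas, hu_adm⟩, rfl⟩
    refine le_sInf ?_
    rintro lam ⟨-, hmod⟩
    have hQ : 1 ≤ ∫⁻ x in Modulus6Aux.unitSq, u x := by
      refine Modulus6Aux.square_lintegral_ge u hu_meas fun y hy => ?_
      have hlip : LipschitzOnWith 1 (fun z : ℝ => (fun i : Fin 2 => if i = 0 then y else z))
          (Set.Icc 0 1) := by
        intro z hz w hw
        rw [ENNReal.coe_one, one_mul]
        refine edist_pi_le_iff.mpr fun i => ?_
        fin_cases i <;> simp [edist_self]
      set γ : RectCurve 2 :=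
        ⟨1, zero_le_one, fun z i => if i = 0 then y else z, hlip⟩ with hγdef
      have hγΓ : γ ∈ Γ := by
        rw [hΓ]; exact ⟨y, hy, rfl, fun z hz => rfl⟩
      have h1 := hu_adm γ hγΓ
      rw [curveInt] at h1
      exact h1
    have hφ_ge : ∀ (x : Pt 2) (t : ℝ≥0∞), t - 1 ≤ φ x t := by
      intro x t
      simp only [hφ]
      split_ifs with h
      · simp [tsub_eq_zero_of_le h]
      · exact le_rfl
    have hmono : ∫⁻ x in Modulus6Aux.unitSq, (u x / lam - 1)
        ≤ modularPhi Set.univ φ (fun x => u x / lam) := by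
      rw [modularPhi, Measure.restrict_univ]
      calc ∫⁻ x in Modulus6Aux.unitSq, (u x / lam - 1)
          ≤ ∫⁻ x in Modulus6Aux.unitSq, φ x (u x / lam) :=
            lintegral_mono fun x => hφ_ge x _
        _ ≤ ∫⁻ x, φ x (u x / lam) := setLIntegral_le_lintegral _ _
    have hsum : (∫⁻ x in Modulus6Aux.unitSq, u x) * lam⁻¹
        ≤ (∫⁻ x in Modulus6Aux.unitSq, (u x / lam - 1)) + 1 := by
      calc (∫⁻ x in Modulus6Aux.unitSq, u x) * lam⁻¹
          = ∫⁻ x in Modulus6Aux.unitSq, u x * lam⁻¹ :=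
            (lintegral_mul_const _ hu_meas).symm
        _ ≤ ∫⁻ x in Modulus6Aux.unitSq, ((u x / lam - 1) + 1) := by
            refine lintegral_mono fun x => ?_
            rw [ENNReal.div_eq_inv_mul, mul_comm]
            exact le_tsub_add
        _ = (∫⁻ x in Modulus6Aux.unitSq, (u x / lam - 1))
              + ∫⁻ _ in Modulus6Aux.unitSq, (1:ℝ≥0∞) :=
            lintegral_add_right _ measurable_const
        _ = _ := by rw [setLIntegral_const, Modulus6Aux.volume_unitSq, mul_one]
    have h2 : lam⁻¹ ≤ 2 := by
      calc lam⁻¹ = 1 * lam⁻¹ := (one_mul _).symm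
        _ ≤ (∫⁻ x in Modulus6Aux.unitSq, u x) * lam⁻¹ := mul_le_mul_left hQ _
        _ ≤ (∫⁻ x in Modulus6Aux.unitSq, (u x / lam - 1)) + 1 := hsum
        _ ≤ 1 + 1 := add_le_add_left (hmono.trans hmod) 1
        _ = 2 := one_add_one_eq_two
    exact ENNReal.inv_le_inv.mp (by rw [inv_inv]; exact h2)
end
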